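/- The transformed function 𝔔_{α,F,C} satisfies 𝔔_{α,F,C}(u, 1,…,1) = u for all u ∈ [0,1], i.e., its first marginal is uniform on [0,1]. -/

import Mathlib

/-! Since `F` is monotone, the intervals `(F(n-1), F(n)]` are disjoint, so `⌈s⌉_{α,F}` is
either `0` or a convex combination `F_α(n)` of two values of `F`; in any case it lies in `[0,1]`.
Every section `t ↦ c(⌈s⌉_{α,F}, t)` therefore integrates to `1` over `[0,1]^d`, and Fubini gives
`𝔔_{α,F,C}(u, 1, …, 1) = λ([0,u]) = u`. -/

open MeasureTheory Set Filter

/-- `F(n-1)` with the convention `F(-1) = 0`. -/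
noncomputable def Fm (F : ℕ → ℝ) : ℕ → ℝ := fun n => if n = 0 then 0 else F (n - 1)

/-- `F_α(n) = (1-α) F(n-1) + α F(n)`. -/
noncomputable def Falpha (α : ℝ) (F : ℕ → ℝ) (n : ℕ) : ℝ :=
  (1 - α) * Fm F n + α * F n

/-- `⌈u⌉_{α,F} = Σ_{n ≥ 0} F_α(n) · 1_{(F(n-1), F(n)]}(u)`, with `⌈0⌉ = 0` automatic. -/
noncomputable def ceilT (α : ℝ) (F : ℕ → ℝ) (u : ℝ) : ℝ :=
  ∑' n : ℕ, Falpha α F n * Set.indicator (Set.Ioc (Fm F n) (F n)) (fun _ => (1 : ℝ)) u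

/-- `𝔔_{α,F,C}(u,v) = ∫_{[0,u]×[0,v]} c(⌈s⌉_{α,F}, t) dλ^{d+1}(s,t)`,
the distribution function of the transformed density. -/
noncomputable def Qbox (d : ℕ) (α : ℝ) (F : ℕ → ℝ) (c : ℝ → (Fin d → ℝ) → ℝ)
    (u : ℝ) (v : Fin d → ℝ) : ℝ :=
  ∫ p in (Set.Icc (0 : ℝ) u) ×ˢ (Set.Icc (0 : Fin d → ℝ) v), c (ceilT α F p.1) p.2

section Transformation

open Function

variable {F : ℕ → ℝ}

lemma Fm_mem_Icc (hF : ∀ n, F n ∈ Icc (0 : ℝ) 1) (n : ℕ) : Fm F n ∈ Icc (0 : ℝ) 1 := by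
  unfold Fm
  split_ifs
  · simp
  · exact hF _

lemma Falpha_mem_Icc {α : ℝ} (hα : α ∈ Icc (0 : ℝ) 1) (hF : ∀ n, F n ∈ Icc (0 : ℝ) 1) (n : ℕ) :
    Falpha α F n ∈ Icc (0 : ℝ) 1 :=
  convex_Icc (0 : ℝ) 1 (Fm_mem_Icc hF n) (hF n) (sub_nonneg.2 hα.2) hα.1 (by ring)

lemma Monotone.le_Fm_of_lt (hF : Monotone F) {m n : ℕ} (hmn : m < n) : F m ≤ Fm F n := by
  rw [Fm, if_neg (by omega)]
  exact hF (by omega)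

lemma Monotone.pairwise_disjoint_Ioc_Fm (hF : Monotone F) :
    Pairwise (Disjoint on fun n => Ioc (Fm F n) (F n)) :=
  (pairwise_disjoint_on _).2 fun _ _ hmn => Ioc_disjoint_Ioc_of_le (hF.le_Fm_of_lt hmn)

lemma ceilT_eq_Falpha (hF : Monotone F) (α : ℝ) {n : ℕ} {s : ℝ} (hs : s ∈ Ioc (Fm F n) (F n)) :
    ceilT α F s = Falpha α F n := by
  unfold ceilT
  rw [tsum_eq_single n, indicator_of_mem hs, mul_one]
  intro m hmn
  have hs' : s ∉ Ioc (Fm F m) (F m) :=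
    fun hm => (hF.pairwise_disjoint_Ioc_Fm hmn).notMem_of_mem_right hs hm
  rw [indicator_of_notMem hs', mul_zero]

lemma ceilT_eq_zero (α : ℝ) {s : ℝ} (hs : ∀ n, s ∉ Ioc (Fm F n) (F n)) : ceilT α F s = 0 := by
  unfold ceilT
  simp [indicator_of_notMem (hs _)]

lemma ceilT_mem_Icc (hF : Monotone F) (hF01 : ∀ n, F n ∈ Icc (0 : ℝ) 1) {α : ℝ}
    (hα : α ∈ Icc (0 : ℝ) 1) (s : ℝ) : ceilT α F s ∈ Icc (0 : ℝ) 1 := by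
  by_cases hs : ∃ n, s ∈ Ioc (Fm F n) (F n)
  · obtain ⟨n, hn⟩ := hs
    rw [ceilT_eq_Falpha hF α hn]
    exact Falpha_mem_Icc hα hF01 n
  · push Not at hs
    rw [ceilT_eq_zero α hs]
    exact left_mem_Icc.2 zero_le_one

end Transformation

lemma setIntegral_prod_eq_measureReal {X Y : Type*} [MeasurableSpace X] [MeasurableSpace Y]
    {μ : Measure X} {ν : Measure Y} [SFinite μ] [SFinite ν] {f : X × Y → ℝ} {s : Set X}
    {t : Set Y} (hs : MeasurableSet s) (hf : IntegrableOn f (s ×ˢ t) (μ.prod ν))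
    (hsec : ∀ x ∈ s, ∫ y in t, f (x, y) ∂ν = 1) :
    ∫ p in s ×ˢ t, f p ∂μ.prod ν = μ.real s := by
  rw [setIntegral_prod f hf, setIntegral_congr_fun hs hsec]
  simp

theorem stmt5_general (d : ℕ) (F : ℕ → ℝ) (hmono : Monotone F) (hF0 : ∀ n, 0 ≤ F n)
    (hF1 : ∀ n, F n ≤ 1)
    (α : ℝ) (hα : α ∈ Set.Ioc (0 : ℝ) 1)
    (c : ℝ → (Fin d → ℝ) → ℝ)
    (hc_sec : ∀ u ∈ Set.Icc (0 : ℝ) 1, ∫ v in Set.Icc (0 : Fin d → ℝ) 1, c u v = 1)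
    (hc_int : IntegrableOn (fun p : ℝ × (Fin d → ℝ) => c (ceilT α F p.1) p.2)
      ((Set.Icc (0 : ℝ) 1) ×ˢ (Set.Icc (0 : Fin d → ℝ) 1))) :
    ∀ u ∈ Set.Icc (0 : ℝ) 1, Qbox d α F c u (fun _ => 1) = u := by
  intro u hu
  have hsec (s : ℝ) : ∫ v in Icc (0 : Fin d → ℝ) 1, c (ceilT α F s) v = 1 :=
    hc_sec _ (ceilT_mem_Icc hmono (fun n => ⟨hF0 n, hF1 n⟩) (Ioc_subset_Icc_self hα) s)
  have hint := hc_int.mono_set (prod_mono (Icc_subset_Icc_right hu.2) subset_rfl)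
  rw [Measure.volume_eq_prod] at hint
  unfold Qbox
  rw [Measure.volume_eq_prod]
  exact (setIntegral_prod_eq_measureReal measurableSet_Icc hint fun s _ => hsec s).trans
    (by simp [hu.1])

/-- the first marginal of the transformed distribution function is uniform:
`𝔔_{α,F,C}(u, 1, …, 1) = u` for all `u ∈ [0,1]`. -/
theorem stmt5 (d : ℕ) (F : ℕ → ℝ) (hmono : Monotone F) (hF0 : ∀ n, 0 ≤ F n)
    (hF1 : ∀ n, F n ≤ 1) (hlim : Tendsto F atTop (nhds 1))
    (α : ℝ) (hα : α ∈ Set.Ioc (0 : ℝ) 1)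
    (c : ℝ → (Fin d → ℝ) → ℝ)
    (hc_meas : Measurable (Function.uncurry c))
    (hc_nonneg : ∀ u v, 0 ≤ c u v)
    (hc_sec : ∀ u ∈ Set.Icc (0 : ℝ) 1, ∫ v in Set.Icc (0 : Fin d → ℝ) 1, c u v = 1)
    (hc_int : IntegrableOn (fun p : ℝ × (Fin d → ℝ) => c (ceilT α F p.1) p.2)
      ((Set.Icc (0 : ℝ) 1) ×ˢ (Set.Icc (0 : Fin d → ℝ) 1))) :
    ∀ u ∈ Set.Icc (0 : ℝ) 1, Qbox d α F c u (fun _ => 1) = u :=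
  stmt5_general d F hmono hF0 hF1 α hα c hc_sec hc_int
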